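/- Let d > 3, let C be a d-copula, and let k be an integer with 1 ≤ k < (d−1)/2. Let C_{(d−k),a} and C_{(d−k),b} be two (d−k)-dimensional margins of C, i.e., functions obtained from C by setting the arguments at two (possibly different) fixed sets of k coordinate positions equal to 1. Then for all ũ ∈ [0,1]^{d−k}, |C_{(d−k),a}(ũ) − C_{(d−k),b}(ũ)| ≤ (d−1)/(d+1) < (d−k−1)/(d−k). -/

import Mathlib

/-!
The two margins are values of `C` at points `x, y ∈ [0,1]^d` carrying the same coordinates in
different positions (`k` ones and the entries of `u`), so `∑ x = ∑ y`. Let `t = min u`, a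
coordinate of `x` below every coordinate of `y`. The Fréchet bounds `0 ≤ C y`, `C x ≤ t` and
`∑ y - (d - 1) ≤ C y` give `C x - C y ≤ t` and `C x - C y ≤ t - ∑ y + d - 1`, while
`C x - C y ≤ ∑ (x i - y i)⁺ ≤ ∑ x - d t` because `C` is 1-Lipschitz for the `ℓ¹` distance.
Adding the last two, `2 (C x - C y) ≤ (d - 1) (1 - t)`, and
`min t ((d - 1) (1 - t) / 2) ≤ (d - 1) / (d + 1)`.
-/

/-- A `d`-copula: a function `C : [0,1]^d → ℝ` (defined on all of `(Fin d → ℝ)`,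
with the copula conditions imposed on `[0,1]^d`) that is grounded, has uniform
one-dimensional margins, and is `d`-increasing. -/
def IsCopula (d : ℕ) (C : (Fin d → ℝ) → ℝ) : Prop :=
  (∀ u : Fin d → ℝ, (∀ i, u i ∈ Set.Icc (0:ℝ) 1) → (∃ i, u i = 0) → C u = 0) ∧
  (∀ u : Fin d → ℝ, (∀ i, u i ∈ Set.Icc (0:ℝ) 1) →
    ∀ i : Fin d, (∀ j, j ≠ i → u j = 1) → C u = u i) ∧
  (∀ a b : Fin d → ℝ, (∀ i, a i ∈ Set.Icc (0:ℝ) 1) → (∀ i, b i ∈ Set.Icc (0:ℝ) 1) →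
    (∀ i, a i ≤ b i) →
    0 ≤ ∑ S : Finset (Fin d),
        (-1 : ℝ) ^ (d - S.card) * C (fun k => if k ∈ S then b k else a k))

/-- The `(d−k)`-dimensional margin of `C` obtained by setting the arguments at the
coordinate positions in `S` (a set of `k` positions) equal to `1`, and filling the
remaining `d−k` coordinates in increasing order with the `d−k` variables. -/
noncomputable def margin (d k : ℕ) (C : (Fin d → ℝ) → ℝ) (S : Finset (Fin d))
    (hS : Sᶜ.card = d - k) (u : Fin (d - k) → ℝ) : ℝ :=
  C fun i => if h : i ∈ Sᶜ then u ((Sᶜ.orderIsoOfFin hS).symm ⟨i, h⟩) else 1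

open Finset Function

theorem Finset.sum_powerset_singleton {α M : Type*} [DecidableEq α] [AddCommMonoid M] (a : α)
    (f : Finset α → M) : ∑ U ∈ ({a} : Finset α).powerset, f U = f ∅ + f {a} := by
  simpa using sum_powerset_insert (notMem_empty a) f

theorem le_of_update_le {ι : Type*} [Fintype ι] [DecidableEq ι] {f : (ι → ℝ) → ℝ}
    (hf : ∀ p : ι → ℝ, (∀ i, p i ∈ Set.Icc (0 : ℝ) 1) →
      ∀ j s, 0 ≤ s → s ≤ p j → f (update p j s) ≤ f p)
    {a b : ι → ℝ} (ha : ∀ i, a i ∈ Set.Icc (0 : ℝ) 1) (hb : ∀ i, b i ∈ Set.Icc (0 : ℝ) 1)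
    (hab : a ≤ b) : f a ≤ f b := by
  have key : ∀ T : Finset ι, f (T.piecewise a b) ≤ f b := by
    intro T
    induction T using Finset.induction_on with
    | empty => simp
    | insert j T hj ih =>
      rw [piecewise_insert]
      refine (hf _ (fun i => T.piecewise_cases a b _ (ha i) (hb i)) j _ (ha j).1 ?_).trans ih
      rw [piecewise_eq_of_notMem _ _ _ hj]
      exact hab j
  simpa using key univ

theorem Finset.sum_univ_update {ι M : Type*} [Fintype ι] [DecidableEq ι] [AddCommGroup M]
    (p : ι → M) (j : ι) (s : M) : ∑ i, update p j s i = ∑ i, p i - p j + s := by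
  rw [sum_update_of_mem (mem_univ j), ← add_sum_erase _ p (mem_univ j), sdiff_singleton_eq_erase]
  abel

namespace IsCopula

variable {d : ℕ} {C : (Fin d → ℝ) → ℝ}

theorem sum_powerset_nonneg (hC : IsCopula d C) (T : Finset (Fin d)) {a b : Fin d → ℝ}
    (ha : ∀ i, a i ∈ Set.Icc (0 : ℝ) 1) (hb : ∀ i, b i ∈ Set.Icc (0 : ℝ) 1) (hab : a ≤ b)
    (ha₀ : ∀ i ∉ T, a i = 0) :
    0 ≤ ∑ U ∈ T.powerset, (-1 : ℝ) ^ #U * C (U.piecewise a b) := by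
  have hmem : ∀ U : Finset (Fin d), ∀ i, U.piecewise a b i ∈ Set.Icc (0 : ℝ) 1 :=
    fun U i => U.piecewise_cases a b _ (ha i) (hb i)
  -- Index the vertices of the box by the set `U` of coordinates taken from `a`; grounding kills
  -- every vertex with a coordinate from `a` outside `T`.
  calc 0 ≤ _ := hC.2.2 a b ha hb hab
    _ = ∑ U : Finset (Fin d), (-1 : ℝ) ^ #U * C (U.piecewise a b) := by
        refine Fintype.sum_bijective compl compl_bijective _ _ fun S => ?_
        rw [Finset.piecewise_compl, card_compl, Fintype.card_fin]
        rfl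
    _ = _ := by
        refine (sum_subset (subset_univ _) fun U _ hU => ?_).symm
        obtain ⟨i, hiU, hiT⟩ := not_subset.1 (mt mem_powerset.2 hU)
        rw [hC.1 _ (hmem U) ⟨i, by rw [piecewise_eq_of_mem _ _ _ hiU, ha₀ i hiT]⟩, mul_zero]

theorem update_le (hC : IsCopula d C) {p : Fin d → ℝ} (hp : ∀ i, p i ∈ Set.Icc (0 : ℝ) 1)
    (i : Fin d) {s : ℝ} (hs₀ : 0 ≤ s) (hs : s ≤ p i) : C (update p i s) ≤ C p := by
  have hvol := hC.sum_powerset_nonneg {i} (a := Pi.single i s) (b := p)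
    (fun l => by rcases eq_or_ne l i with rfl | hl <;> simp [*, (hp _).2.trans' hs])
    hp (fun l => by rcases eq_or_ne l i with rfl | hl <;> simp [*, (hp _).1])
    (fun l hl => Pi.single_eq_of_ne (by simpa using hl) _)
  simpa [sum_powerset_singleton, piecewise_singleton] using hvol

theorem update_update_sub_le (hC : IsCopula d C) {p : Fin d → ℝ}
    (hp : ∀ i, p i ∈ Set.Icc (0 : ℝ) 1) {i j : Fin d} (hij : i ≠ j) {α γ : ℝ}
    (hα₀ : 0 ≤ α) (hα : α ≤ p i) (hγ₀ : 0 ≤ γ) (hγ : γ ≤ p j) :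
    C (update p j γ) - C (update (update p j γ) i α) ≤ C p - C (update p i α) := by
  have hvol := hC.sum_powerset_nonneg {i, j} (a := update (Pi.single j γ) i α) (b := p)
    (fun l => by
      rcases eq_or_ne l i with rfl | hli
      · simp [*, (hp _).2.trans' hα]
      rcases eq_or_ne l j with rfl | hlj <;> simp [*, (hp _).2.trans' hγ])
    hp (fun l => by
      rcases eq_or_ne l i with rfl | hli
      · simp [*]
      rcases eq_or_ne l j with rfl | hlj <;> simp [*, (hp _).1])
    (fun l hl => by simp_all)
  rw [sum_powerset_insert (by simpa using hij)] at hvol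
  simp only [sum_powerset_singleton, card_empty, pow_zero, piecewise_empty, one_mul,
    card_singleton, pow_one, piecewise_singleton, ne_eq, hij.symm, not_false_eq_true, update_of_ne,
    Pi.single_eq_same, neg_mul, piecewise_insert, update_self, insert_empty_eq, mem_singleton, hij,
    card_insert_of_notMem, Nat.reduceAdd, even_two, Even.neg_pow, one_pow] at hvol
  linarith

theorem apply_update_one (hC : IsCopula d C) (i : Fin d) {s : ℝ} (hs : s ∈ Set.Icc (0 : ℝ) 1) :
    C (update 1 i s) = s := by
  have hmem : ∀ l, update (1 : Fin d → ℝ) i s l ∈ Set.Icc (0 : ℝ) 1 := fun l => by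
    rcases eq_or_ne l i with rfl | hl <;> simp [*]
  simpa using hC.2.1 _ hmem i fun l hl => by simp [hl]

theorem monotone (hC : IsCopula d C) {a b : Fin d → ℝ} (ha : ∀ i, a i ∈ Set.Icc (0 : ℝ) 1)
    (hb : ∀ i, b i ∈ Set.Icc (0 : ℝ) 1) (hab : a ≤ b) : C a ≤ C b :=
  le_of_update_le (fun _ hp j _ hs₀ hs => hC.update_le hp j hs₀ hs) ha hb hab

theorem update_sub_update_le (hC : IsCopula d C) {p : Fin d → ℝ}
    (hp : ∀ i, p i ∈ Set.Icc (0 : ℝ) 1) (i : Fin d) {α β : ℝ} (hα₀ : 0 ≤ α) (hαβ : α ≤ β)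
    (hβ₁ : β ≤ 1) : C (update p i β) - C (update p i α) ≤ β - α := by
  -- The increment in coordinate `i` grows with every other coordinate, and equals `β - α`
  -- once all of them are `1`.
  have hinc : C (update p i β) - C (update p i α) ≤ C (update 1 i β) - C (update 1 i α) := by
    refine le_of_update_le (f := fun x => C (update x i β) - C (update x i α))
      (b := 1) (fun q hq j s hs₀ hs => ?_) hp (fun _ => ⟨zero_le_one, le_rfl⟩)
      fun l => (hp l).2
    rcases eq_or_ne j i with rfl | hji
    · simp
    have := hC.update_update_sub_le (p := update q i β)
      (fun l => by rcases eq_or_ne l i with rfl | hl <;> simp [*, hα₀.trans hαβ])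
      hji.symm hα₀ (by simpa using hαβ) hs₀ (by simpa [hji] using hs)
    simpa [update_comm hji.symm] using this
  rwa [hC.apply_update_one i ⟨hα₀.trans hαβ, hβ₁⟩, hC.apply_update_one i ⟨hα₀, hαβ.trans hβ₁⟩]
    at hinc

theorem sub_le_sum_sub (hC : IsCopula d C) {a b : Fin d → ℝ} (ha : ∀ i, a i ∈ Set.Icc (0 : ℝ) 1)
    (hb : ∀ i, b i ∈ Set.Icc (0 : ℝ) 1) (hab : a ≤ b) : C b - C a ≤ ∑ i, (b i - a i) := by
  have := le_of_update_le (f := fun x => ∑ i, x i - C x) (fun p hp j s hs₀ hs => by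
    have := hC.update_sub_update_le hp j hs₀ hs (hp j).2
    simp only [update_eq_self] at this
    simp only [sum_univ_update]
    linarith) ha hb hab
  simp only [sum_sub_distrib]
  linarith

theorem nonneg (hC : IsCopula d C) {x : Fin d → ℝ} (hx : ∀ i, x i ∈ Set.Icc (0 : ℝ) 1) :
    0 ≤ C x := by
  simpa using hC.sum_powerset_nonneg ∅ (fun _ => ⟨le_rfl, zero_le_one⟩) hx (fun i => (hx i).1)
    fun _ _ => rfl

theorem le_apply (hC : IsCopula d C) {x : Fin d → ℝ} (hx : ∀ i, x i ∈ Set.Icc (0 : ℝ) 1)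
    (i : Fin d) : C x ≤ x i := by
  have hmem : ∀ l, update (1 : Fin d → ℝ) i (x i) l ∈ Set.Icc (0 : ℝ) 1 := fun l => by
    rcases eq_or_ne l i with rfl | hl <;> simp [*, hx l]
  refine (hC.monotone hx hmem fun l => ?_).trans_eq (hC.apply_update_one i (hx i))
  rcases eq_or_ne l i with rfl | hl <;> simp [*, (hx l).2]

theorem sum_sub_le (hC : IsCopula d C) (hd : 0 < d) {x : Fin d → ℝ}
    (hx : ∀ i, x i ∈ Set.Icc (0 : ℝ) 1) : ∑ i, x i - (d - 1) ≤ C x := by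
  have hone : C 1 = 1 := by simpa using hC.apply_update_one ⟨0, hd⟩ ⟨zero_le_one, le_rfl⟩
  have := hC.sub_le_sum_sub (b := 1) hx (fun _ => ⟨zero_le_one, le_rfl⟩) fun i => (hx i).2
  simp only [hone, Pi.one_apply, sum_sub_distrib, sum_const, card_univ, Fintype.card_fin,
    nsmul_eq_mul, mul_one] at this
  linarith

theorem sub_le_sum_max (hC : IsCopula d C) {x y : Fin d → ℝ} (hx : ∀ i, x i ∈ Set.Icc (0 : ℝ) 1)
    (hy : ∀ i, y i ∈ Set.Icc (0 : ℝ) 1) : C x - C y ≤ ∑ i, max (x i - y i) 0 := by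
  have hxy : ∀ i, (x ⊔ y) i ∈ Set.Icc (0 : ℝ) 1 := fun i =>
    ⟨(hx i).1.trans le_sup_left, sup_le (hx i).2 (hy i).2⟩
  have h₁ := hC.monotone hx hxy le_sup_left
  have h₂ := hC.sub_le_sum_sub hy hxy le_sup_right
  have hmax : ∀ i, (x ⊔ y) i - y i = max (x i - y i) 0 := fun i => by
    rw [← sub_self (y i), max_sub_sub_right]; rfl
  simp only [hmax] at h₂
  linarith

theorem sub_le_of_sum_eq (hC : IsCopula d C) (hd : 0 < d) {x y : Fin d → ℝ}
    (hx : ∀ i, x i ∈ Set.Icc (0 : ℝ) 1) (hy : ∀ i, y i ∈ Set.Icc (0 : ℝ) 1)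
    (hsum : ∑ i, x i = ∑ i, y i) {i₀ : Fin d} (hx₀ : ∀ i, x i₀ ≤ x i) (hy₀ : ∀ i, x i₀ ≤ y i) :
    C x - C y ≤ ((d : ℝ) - 1) / ((d : ℝ) + 1) := by
  set t := x i₀
  have hsmall : C x - C y ≤ t := by linarith [hC.le_apply hx i₀, hC.nonneg hy]
  have hspread : C x - C y ≤ ∑ i, x i - d * t := by
    calc C x - C y ≤ ∑ i, max (x i - y i) 0 := hC.sub_le_sum_max hx hy
      _ ≤ ∑ i, (x i - t) :=
        sum_le_sum fun i _ => max_le (by linarith [hy₀ i]) (by linarith [hx₀ i])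
      _ = ∑ i, x i - d * t := by simp [sum_sub_distrib]
  have hfrechet : C x - C y ≤ t - ∑ i, y i + (d - 1) := by
    linarith [hC.le_apply hx i₀, hC.sum_sub_le hd hy]
  have hd₁ : (1 : ℝ) ≤ d := by exact_mod_cast hd
  rw [le_div_iff₀ (by linarith)]
  nlinarith [mul_le_mul_of_nonneg_left hsmall (sub_nonneg.2 hd₁)]

end IsCopula

section Margin

variable {d k : ℕ} (S : Finset (Fin d)) (hS : Sᶜ.card = d - k) (u : Fin (d - k) → ℝ)

def marginPoint : Fin d → ℝ :=
  fun i => if h : i ∈ Sᶜ then u ((Sᶜ.orderIsoOfFin hS).symm ⟨i, h⟩) else 1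

theorem margin_eq (C : (Fin d → ℝ) → ℝ) : margin d k C S hS u = C (marginPoint S hS u) := rfl

theorem marginPoint_cases (P : ℝ → Prop) (h₁ : P 1) (hu : ∀ j, P (u j)) (i : Fin d) :
    P (marginPoint S hS u i) := by
  unfold marginPoint
  split_ifs
  exacts [hu _, h₁]

theorem marginPoint_orderIsoOfFin (j : Fin (d - k)) :
    marginPoint S hS u (Sᶜ.orderIsoOfFin hS j) = u j := by
  rw [marginPoint, dif_pos (Sᶜ.orderIsoOfFin hS j).2, Subtype.coe_eta, OrderIso.symm_apply_apply]

theorem sum_marginPoint : ∑ i, marginPoint S hS u i = #S + ∑ j, u j := by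
  rw [← sum_add_sum_compl S, ← sum_coe_sort Sᶜ, ← (Sᶜ.orderIsoOfFin hS).toEquiv.sum_comp]
  congr 1
  · rw [sum_congr rfl fun i hi => dif_neg (by simpa using hi)]
    simp
  · exact sum_congr rfl fun j _ => marginPoint_orderIsoOfFin S hS u j

end Margin

theorem IsCopula.margin_sub_margin_le {d k : ℕ} {C : (Fin d → ℝ) → ℝ} (hC : IsCopula d C)
    (hk : k < d) {Sa Sb : Finset (Fin d)} (hSa : Saᶜ.card = d - k) (hSb : Sbᶜ.card = d - k)
    {u : Fin (d - k) → ℝ} (hu : ∀ i, u i ∈ Set.Icc (0 : ℝ) 1) :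
    margin d k C Sa hSa u - margin d k C Sb hSb u ≤ ((d : ℝ) - 1) / ((d : ℝ) + 1) := by
  obtain ⟨j₀, -, hj₀⟩ := exists_min_image univ u (univ_nonempty_iff.2 ⟨⟨0, by omega⟩⟩)
  have hlow : ∀ S (hS : Sᶜ.card = d - k) i, u j₀ ≤ marginPoint S hS u i :=
    fun S hS => marginPoint_cases S hS u _ (hu j₀).2 fun j => hj₀ j (mem_univ j)
  have hcard : #Sa = #Sb := by
    have := card_add_card_compl Sa
    have := card_add_card_compl Sb
    simp only [Fintype.card_fin] at *
    omega
  rw [margin_eq, margin_eq]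
  refine hC.sub_le_of_sum_eq (by omega) (marginPoint_cases Sa hSa u _ ⟨zero_le_one, le_rfl⟩ hu)
    (marginPoint_cases Sb hSb u _ ⟨zero_le_one, le_rfl⟩ hu)
    (by rw [sum_marginPoint, sum_marginPoint, hcard]) (i₀ := Saᶜ.orderIsoOfFin hSa j₀) ?_ ?_
  all_goals rw [marginPoint_orderIsoOfFin]; exact hlow _ _

/-- Two `(d−k)`-dimensional margins of a `d`-copula (with `1 ≤ k < (d−1)/2`) differ by at
most `(d−1)/(d+1)`, which is strictly less than `(d−k−1)/(d−k)`. -/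
theorem margins_bound (d k : ℕ)
    (hk2 : (k : ℝ) < ((d : ℝ) - 1) / 2)
    (C : (Fin d → ℝ) → ℝ) (hC : IsCopula d C)
    (Sa Sb : Finset (Fin d)) (ha : Sa.card = k) (hb : Sb.card = k)
    (u : Fin (d - k) → ℝ) (hu : ∀ i, u i ∈ Set.Icc (0:ℝ) 1) :
    |margin d k C Sa (by simp [Finset.card_compl, ha]) u -
        margin d k C Sb (by simp [Finset.card_compl, hb]) u| ≤
      ((d : ℝ) - 1) / ((d : ℝ) + 1) ∧
    ((d : ℝ) - 1) / ((d : ℝ) + 1) < ((d : ℝ) - (k : ℝ) - 1) / ((d : ℝ) - (k : ℝ)) := by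
  have hk₀ : (0 : ℝ) ≤ k := k.cast_nonneg
  have hkd : k < d := by exact_mod_cast (show (k : ℝ) < d by linarith)
  refine ⟨abs_sub_le_iff.2 ⟨hC.margin_sub_margin_le hkd _ _ hu, hC.margin_sub_margin_le hkd _ _ hu⟩,
    ?_⟩
  rw [div_lt_div_iff₀ (by linarith) (by linarith)]
  nlinarith
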